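/- arXiv:2401.07759 — 3 statements merged into one kernel-verified Lean document; each statement's English description precedes it below -/
import Mathlib

section
/- Let U ⊆ ℂ be open, let R > 0, let α, β : ℂ → ℂ be holomorphic (complex-differentiable) on U with α(z) ≠ 0 and β(z) ≠ 0 for all z ∈ U, and let h : ℂ → ℝ be positive and smooth on U, satisfying the R-scaled vortex equation for (α, β) on U: Δ(log ∘ h)(z) = 4R²(|α(z)|²·h(z)² − |β(z)|²·h(z)⁻²) for all z ∈ U. Define u : U → ℝ by u(z) = log(|α(z)|²·h(z)⁴/|β(z)|²). Then u satisfies the sinh-Gordon type equation Δu(z) = 32·R²·|α(z)|·|β(z)|·sinh(u(z)/2) for all z ∈ U. -/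
/-- The Euclidean Laplacian of a function `u : ℂ → ℝ`, where `ℂ` is regarded as a
two-dimensional real inner product space: `Δu = ∂²u/∂x² + ∂²u/∂y²`. -/
noncomputable def laplacian (u : ℂ → ℝ) (z : ℂ) : ℝ :=
  fderiv ℝ (fun w => fderiv ℝ u w 1) z 1 +
    fderiv ℝ (fun w => fderiv ℝ u w Complex.I) z Complex.I

lemma laplacian_congr {f g : ℂ → ℝ} {z : ℂ} (h : f =ᶠ[nhds z] g) :
    laplacian f z = laplacian g z := by
  have h1 : (fun w => fderiv ℝ f w 1) =ᶠ[nhds z] fun w => fderiv ℝ g w 1 := by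
    filter_upwards [h.eventuallyEq_nhds] with w hw
    rw [hw.fderiv_eq]
  have h2 : (fun w => fderiv ℝ f w Complex.I) =ᶠ[nhds z] fun w => fderiv ℝ g w Complex.I := by
    filter_upwards [h.eventuallyEq_nhds] with w hw
    rw [hw.fderiv_eq]
  unfold laplacian
  rw [h1.fderiv_eq, h2.fderiv_eq]

lemma fderiv_re_comp {g : ℂ → ℂ} {w : ℂ} (hg : DifferentiableAt ℂ g w) (v : ℂ) :
    fderiv ℝ (fun x => (g x).re) w v = (deriv g w * v).re := by
  have h1 : fderiv ℝ (fun x => (g x).re) w =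
      (Complex.reCLM : ℂ →L[ℝ] ℝ).comp ((fderiv ℂ g w).restrictScalars ℝ) := by
    have := fderiv_comp (𝕜 := ℝ) w (Complex.reCLM.differentiableAt) (hg.restrictScalars ℝ)
    simpa [Complex.reCLM.fderiv, hg.fderiv_restrictScalars ℝ, Function.comp_def] using this
  have h2 : fderiv ℂ g w v = deriv g w * v := by
    have := (fderiv ℂ g w).map_smul v 1
    simp only [smul_eq_mul, mul_one] at this
    rw [← toSpanSingleton_deriv] at this ⊢
    simp [this, mul_comm]
  simp [h1, h2]

lemma fderiv_im_comp {g : ℂ → ℂ} {w : ℂ} (hg : DifferentiableAt ℂ g w) (v : ℂ) :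
    fderiv ℝ (fun x => (g x).im) w v = (deriv g w * v).im := by
  have h1 : fderiv ℝ (fun x => (g x).im) w =
      (Complex.imCLM : ℂ →L[ℝ] ℝ).comp ((fderiv ℂ g w).restrictScalars ℝ) := by
    have := fderiv_comp (𝕜 := ℝ) w (Complex.imCLM.differentiableAt) (hg.restrictScalars ℝ)
    simpa [Complex.imCLM.fderiv, hg.fderiv_restrictScalars ℝ, Function.comp_def] using this
  have h2 : fderiv ℂ g w v = deriv g w * v := by
    have := (fderiv ℂ g w).map_smul v 1
    simp only [smul_eq_mul, mul_one] at this
    rw [← toSpanSingleton_deriv] at this ⊢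
    simp [this, mul_comm]
  simp [h1, h2]

lemma harmonic_re {V : Set ℂ} (hV : IsOpen V) {g : ℂ → ℂ}
    (hg : DifferentiableOn ℂ g V) {z : ℂ} (hz : z ∈ V) :
    laplacian (fun w => (g w).re) z = 0 := by
  have hgan := hg.analyticOnNhd hV
  have hg' : DifferentiableOn ℂ (deriv g) V := hgan.deriv.differentiableOn
  have hmem : ∀ᶠ w in nhds z, w ∈ V := hV.mem_nhds hz
  have h1 : (fun w => fderiv ℝ (fun x => (g x).re) w 1) =ᶠ[nhds z]
      fun w => (deriv g w).re := by
    filter_upwards [hmem] with w hw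
    rw [fderiv_re_comp (hg.differentiableAt (hV.mem_nhds hw)), mul_one]
  have h2 : (fun w => fderiv ℝ (fun x => (g x).re) w Complex.I) =ᶠ[nhds z]
      fun w => -((deriv g w).im) := by
    filter_upwards [hmem] with w hw
    rw [fderiv_re_comp (hg.differentiableAt (hV.mem_nhds hw)), Complex.mul_I_re]
  have hd' : DifferentiableAt ℂ (deriv g) z := hg'.differentiableAt (hV.mem_nhds hz)
  unfold laplacian
  rw [h1.fderiv_eq, h2.fderiv_eq]
  have e1 : fderiv ℝ (fun w => (deriv g w).re) z 1 = (deriv (deriv g) z).re := by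
    rw [fderiv_re_comp hd', mul_one]
  have e2 : fderiv ℝ (fun w => -((deriv g w).im)) z Complex.I
      = -((deriv (deriv g) z).re) := by
    have : fderiv ℝ (fun w => -((deriv g w).im)) z
        = -(fderiv ℝ (fun w => (deriv g w).im) z) := fderiv_neg
    rw [this]
    simp only [ContinuousLinearMap.neg_apply]
    rw [fderiv_im_comp hd', Complex.mul_I_im]
  rw [e1, e2]; ring

lemma laplacian_add_const (f : ℂ → ℝ) (c : ℝ) (z : ℂ) :
    laplacian (fun w => f w + c) z = laplacian f z := by
  unfold laplacian
  simp only [fderiv_add_const]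

lemma laplacian_add {f g : ℂ → ℝ} {z : ℂ} (hf : ContDiffAt ℝ 2 f z)
    (hg : ContDiffAt ℝ 2 g z) :
    laplacian (fun w => f w + g w) z = laplacian f z + laplacian g z := by
  have hev : ∀ᶠ w in nhds z, fderiv ℝ (fun w => f w + g w) w =
      fderiv ℝ f w + fderiv ℝ g w := by
    filter_upwards [hf.eventually (by norm_num), hg.eventually (by norm_num)] with w hfw hgw
    exact fderiv_fun_add (hfw.differentiableAt two_ne_zero) (hgw.differentiableAt two_ne_zero)
  have dfz : DifferentiableAt ℝ (fun w => fderiv ℝ f w) z :=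
    (hf.fderiv_right (m := 1) le_rfl).differentiableAt one_ne_zero
  have dgz : DifferentiableAt ℝ (fun w => fderiv ℝ g w) z :=
    (hg.fderiv_right (m := 1) le_rfl).differentiableAt one_ne_zero
  have key : ∀ v : ℂ, fderiv ℝ (fun w => fderiv ℝ (fun w => f w + g w) w v) z v =
      fderiv ℝ (fun w => fderiv ℝ f w v) z v + fderiv ℝ (fun w => fderiv ℝ g w v) z v := by
    intro v
    have h1 : (fun w => fderiv ℝ (fun w => f w + g w) w v) =ᶠ[nhds z]
        fun w => fderiv ℝ f w v + fderiv ℝ g w v := by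
      filter_upwards [hev] with w hw; rw [hw]; rfl
    rw [h1.fderiv_eq]
    have dfv : DifferentiableAt ℝ (fun w => fderiv ℝ f w v) z :=
      (ContinuousLinearMap.apply ℝ ℝ v).differentiableAt.comp z dfz
    have dgv : DifferentiableAt ℝ (fun w => fderiv ℝ g w v) z :=
      (ContinuousLinearMap.apply ℝ ℝ v).differentiableAt.comp z dgz
    rw [fderiv_fun_add dfv dgv]; rfl
  unfold laplacian
  rw [key 1, key Complex.I]; ring

lemma laplacian_const_mul {f : ℂ → ℝ} {z : ℂ} (c : ℝ) (hf : ContDiffAt ℝ 2 f z) :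
    laplacian (fun w => c * f w) z = c * laplacian f z := by
  have hev : ∀ᶠ w in nhds z, fderiv ℝ (fun w => c * f w) w = c • fderiv ℝ f w := by
    filter_upwards [hf.eventually (by norm_num)] with w hfw
    exact fderiv_const_mul (hfw.differentiableAt two_ne_zero) c
  have dfz : DifferentiableAt ℝ (fun w => fderiv ℝ f w) z :=
    (hf.fderiv_right (m := 1) le_rfl).differentiableAt one_ne_zero
  have key : ∀ v : ℂ, fderiv ℝ (fun w => fderiv ℝ (fun w => c * f w) w v) z v =
      c * fderiv ℝ (fun w => fderiv ℝ f w v) z v := by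
    intro v
    have h1 : (fun w => fderiv ℝ (fun w => c * f w) w v) =ᶠ[nhds z]
        fun w => c * fderiv ℝ f w v := by
      filter_upwards [hev] with w hw; rw [hw]; rfl
    rw [h1.fderiv_eq]
    have dfv : DifferentiableAt ℝ (fun w => fderiv ℝ f w v) z :=
      (ContinuousLinearMap.apply ℝ ℝ v).differentiableAt.comp z dfz
    rw [fderiv_const_mul dfv c]; rfl
  unfold laplacian
  rw [key 1, key Complex.I]; ring

/-- If `α`, `β` are holomorphic and nonvanishing on an open set `U`, `h` is positive and
smooth on `U` and solves the `R`-scaled vortex equation for `(α, β)`, then the function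
`u = log(|α|²h⁴/|β|²)` satisfies the sinh-Gordon type equation
`Δu = 32 R² |α| |β| sinh(u/2)` on `U`. -/
theorem sinh_gordon (U : Set ℂ) (hU : IsOpen U) (R : ℝ) (hR : 0 < R)
    (α β : ℂ → ℂ) (hα : DifferentiableOn ℂ α U) (hβ : DifferentiableOn ℂ β U)
    (hα0 : ∀ z ∈ U, α z ≠ 0) (hβ0 : ∀ z ∈ U, β z ≠ 0)
    (h : ℂ → ℝ) (hpos : ∀ z ∈ U, 0 < h z) (hsm : ContDiffOn ℝ (⊤ : ℕ∞) h U)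
    (hvortex : ∀ z ∈ U, laplacian (Real.log ∘ h) z =
      4 * R ^ 2 * (‖α z‖ ^ 2 * h z ^ 2 -
        ‖β z‖ ^ 2 * (h z ^ 2)⁻¹)) :
    ∀ z ∈ U,
      laplacian (fun w => Real.log (‖α w‖ ^ 2 * h w ^ 4 /
        ‖β w‖ ^ 2)) z =
      32 * R ^ 2 * ‖α z‖ * ‖β z‖ *
        Real.sinh (Real.log (‖α z‖ ^ 2 * h z ^ 4 /
          ‖β z‖ ^ 2) / 2) := by
  intro z hz
  set g₁ : ℂ → ℂ := fun w => Complex.log (α w / α z) with hg₁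
  set g₂ : ℂ → ℂ := fun w => Complex.log (β w / β z) with hg₂
  set S₁ : Set ℂ := U ∩ (fun w => α w / α z) ⁻¹' Complex.slitPlane with hS₁def
  set S₂ : Set ℂ := U ∩ (fun w => β w / β z) ⁻¹' Complex.slitPlane with hS₂def
  have hS₁ : IsOpen S₁ :=
    (hα.continuousOn.div_const _).isOpen_inter_preimage hU Complex.isOpen_slitPlane
  have hS₂ : IsOpen S₂ :=
    (hβ.continuousOn.div_const _).isOpen_inter_preimage hU Complex.isOpen_slitPlane
  have hzS₁ : z ∈ S₁ := by
    refine ⟨hz, ?_⟩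
    simp only [Set.mem_preimage, div_self (hα0 z hz)]
    exact Complex.one_mem_slitPlane
  have hzS₂ : z ∈ S₂ := by
    refine ⟨hz, ?_⟩
    simp only [Set.mem_preimage, div_self (hβ0 z hz)]
    exact Complex.one_mem_slitPlane
  have hdg₁ : DifferentiableOn ℂ g₁ S₁ := by
    rintro w ⟨hwU, hws⟩
    exact (((hα.differentiableAt (hU.mem_nhds hwU)).div_const _).clog hws).differentiableWithinAt
  have hdg₂ : DifferentiableOn ℂ g₂ S₂ := by
    rintro w ⟨hwU, hws⟩
    exact (((hβ.differentiableAt (hU.mem_nhds hwU)).div_const _).clog hws).differentiableWithinAt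
  have hlog₁ : ∀ w ∈ S₁, Real.log (‖α w‖) =
      (g₁ w).re + Real.log (‖α z‖) := by
    rintro w ⟨hwU, _⟩
    rw [hg₁]
    simp only []
    rw [Complex.log_re, norm_div,
      Real.log_div (by simpa using hα0 w hwU) (by simpa using hα0 z hz)]
    ring
  have hlog₂ : ∀ w ∈ S₂, Real.log (‖β w‖) =
      (g₂ w).re + Real.log (‖β z‖) := by
    rintro w ⟨hwU, _⟩
    rw [hg₂]
    simp only []
    rw [Complex.log_re, norm_div,
      Real.log_div (by simpa using hβ0 w hwU) (by simpa using hβ0 z hz)]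
    ring
  set C : ℝ := 2 * Real.log (‖α z‖) - 2 * Real.log (‖β z‖) with hC
  -- local representation of u
  have hloc : (fun w => Real.log (‖α w‖ ^ 2 * h w ^ 4 /
        ‖β w‖ ^ 2)) =ᶠ[nhds z]
      (fun w => 2 * (g₁ w).re + (4 * Real.log (h w) + ((-2) * (g₂ w).re + C))) := by
    filter_upwards [hS₁.mem_nhds hzS₁, hS₂.mem_nhds hzS₂] with w hw₁ hw₂
    have hwU : w ∈ U := hw₁.1
    have hA : ‖α w‖ ≠ 0 := by simpa using hα0 w hwU
    have hB : ‖β w‖ ≠ 0 := by simpa using hβ0 w hwU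
    have hh : h w ≠ 0 := (hpos w hwU).ne'
    rw [Real.log_div (by positivity) (by positivity),
      Real.log_mul (by positivity) (by positivity), Real.log_pow, Real.log_pow, Real.log_pow,
      hlog₁ w hw₁, hlog₂ w hw₂, hC]
    push_cast
    ring
  rw [laplacian_congr hloc]
  -- smoothness of the pieces
  have cd₁ : ContDiffAt ℝ 2 (fun w => (g₁ w).re) z := by
    have h1 : ContDiffOn ℂ 2 g₁ S₁ := (hdg₁.contDiffOn hS₁).of_le le_top
    exact Complex.reCLM.contDiff.contDiffAt.comp z
      ((h1.contDiffAt (hS₁.mem_nhds hzS₁)).restrict_scalars ℝ)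
  have cd₂ : ContDiffAt ℝ 2 (fun w => (g₂ w).re) z := by
    have h1 : ContDiffOn ℂ 2 g₂ S₂ := (hdg₂.contDiffOn hS₂).of_le le_top
    exact Complex.reCLM.contDiff.contDiffAt.comp z
      ((h1.contDiffAt (hS₂.mem_nhds hzS₂)).restrict_scalars ℝ)
  have cdh : ContDiffAt ℝ 2 (fun w => Real.log (h w)) z := by
    have h1 := (hsm.contDiffAt (hU.mem_nhds hz)).of_le (WithTop.coe_le_coe.2 le_top : (2 : WithTop ℕ∞) ≤ ((⊤ : ℕ∞) : WithTop ℕ∞))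
    exact ContDiffAt.log h1 (hpos z hz).ne'
  have cdrest : ContDiffAt ℝ 2
      (fun w => 4 * Real.log (h w) + ((-2) * (g₂ w).re + C)) z :=
    (contDiffAt_const.mul cdh).add ((contDiffAt_const.mul cd₂).add contDiffAt_const)
  rw [laplacian_add (contDiffAt_const.mul cd₁) cdrest,
    laplacian_const_mul 2 cd₁,
    laplacian_add (contDiffAt_const.mul cdh) ((contDiffAt_const.mul cd₂).add contDiffAt_const),
    laplacian_const_mul 4 cdh,
    laplacian_add_const (fun w => (-2) * (g₂ w).re) C,
    laplacian_const_mul (-2) cd₂,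
    harmonic_re hS₁ hdg₁ hzS₁, harmonic_re hS₂ hdg₂ hzS₂]
  have hlh : laplacian (fun w => Real.log (h w)) z = laplacian (Real.log ∘ h) z := rfl
  rw [hlh, hvortex z hz]
  -- final algebra
  set a := ‖α z‖ with ha
  set b := ‖β z‖ with hb
  set H := h z with hH
  have hapos : 0 < a := by rw [ha]; simpa using hα0 z hz
  have hbpos : 0 < b := by rw [hb]; simpa using hβ0 z hz
  have hHpos : 0 < H := hpos z hz
  set t := a * H ^ 2 / b with ht
  have htpos : 0 < t := by positivity
  have h1 : a ^ 2 * H ^ 4 / b ^ 2 = t ^ 2 := by rw [ht]; ring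
  rw [h1, Real.log_pow]
  have h2 : ((2 : ℕ) : ℝ) * Real.log t / 2 = Real.log t := by push_cast; ring
  rw [h2, Real.sinh_log htpos, ht]
  field_simp
  ring
end

section
/- Let U ⊆ ℂ be a nonempty bounded open set. Let u : ℂ → ℝ be continuous on the closure of U and twice continuously differentiable on U, and let K : ℂ → ℝ be continuous on the closure of U with K(z) ≥ 0 for all z ∈ U. Assume that Δu(z) = K(z)·sinh(u(z)/2) for all z ∈ U, and that u(z) < 0 for every z in the topological frontier of U. Then u(z) < 0 for every z ∈ U. -/
/-!
Where `u > 0` the equation gives `Δu ≥ 0`, so `u + ε‖z‖²` is strictly subharmonic there and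
cannot have an interior maximum: this is the weak maximum principle, giving `u ≤ 0`. Since `K`
and `u` are bounded on the compact set `closure U`, the equation then yields `Δu ≥ C u` for a
constant `C ≥ 0`. For such subsolutions Hopf's lemma, proved with the barrier `‖z - p‖⁻²` on an
annulus, forces a nonzero normal derivative at a boundary zero of a ball on which `u < 0`; at an
interior maximum that is impossible, so the zero set of `u` in `U` is open. Since `u < 0` on the
frontier it is also closed in `ℂ`, hence empty because `U` is bounded.
-/

open Set Filter Topology Metric
open scoped Laplacian

theorem IsLocalMax.deriv_deriv_nonpos {g : ℝ → ℝ} {a : ℝ} (h : IsLocalMax g a)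
    (hg : ContinuousAt g a) : deriv (deriv g) a ≤ 0 := by
  by_contra! hpos
  have hconst : g =ᶠ[𝓝 a] fun _ => g a := by
    filter_upwards [h, isLocalMin_of_deriv_deriv_pos hpos h.deriv_eq_zero hg] with t hmax hmin
    exact le_antisymm hmax hmin
  simp [hconst.deriv.deriv_eq] at hpos

section LineRestriction

variable {E : Type*} [NormedAddCommGroup E] [NormedSpace ℝ E] {f : E → ℝ} {x : E}

theorem ContDiffAt.fderiv_fderiv_apply_eq_deriv_deriv (hf : ContDiffAt ℝ 2 f x) (v : E) :
    fderiv ℝ (fderiv ℝ f) x v v = deriv (deriv fun t : ℝ => f (x + t • v)) 0 := by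
  have hline : ∀ t : ℝ, HasDerivAt (fun t : ℝ => x + t • v) v t := fun t => by
    simpa using ((hasDerivAt_id t).smul_const v).const_add x
  have hderiv : deriv (fun t : ℝ => f (x + t • v)) =ᶠ[𝓝 0]
      fun t => fderiv ℝ f (x + t • v) v := by
    have hcont : Tendsto (fun t : ℝ => x + t • v) (𝓝 0) (𝓝 x) := by
      simpa using (hline 0).continuousAt.tendsto
    filter_upwards [hcont.eventually ((hf.eventually (by simp)).mono
      fun w hw => hw.differentiableAt (by simp))] with t ht
    exact (ht.hasFDerivAt.comp_hasDerivAt t (hline t)).deriv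
  have hf' : DifferentiableAt ℝ (fderiv ℝ f) x :=
    (hf.fderiv_right (m := 1) (by norm_num)).differentiableAt (by simp)
  have hcomp := (hf'.hasFDerivAt.clm_apply (hasFDerivAt_const v x)).comp_hasDerivAt_of_eq
    0 (hline 0) (by simp)
  rw [hderiv.deriv_eq, ← Function.comp_def (fun w => fderiv ℝ f w v), hcomp.deriv]
  simp

theorem IsLocalMax.fderiv_fderiv_apply_nonpos (h : IsLocalMax f x) (hf : ContDiffAt ℝ 2 f x)
    (v : E) : fderiv ℝ (fderiv ℝ f) x v v ≤ 0 := by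
  have hline : Continuous fun t : ℝ => x + t • v := by fun_prop
  rw [hf.fderiv_fderiv_apply_eq_deriv_deriv]
  exact IsLocalMax.deriv_deriv_nonpos
    (IsLocalMax.comp_continuous (by simpa using h) hline.continuousAt)
    (hf.continuousAt.comp_of_eq hline.continuousAt (by simp))

end LineRestriction

theorem IsLocalMax.laplacian_nonpos {E : Type*} [NormedAddCommGroup E] [InnerProductSpace ℝ E]
    [FiniteDimensional ℝ E] {f : E → ℝ} {x : E} (h : IsLocalMax f x)
    (hf : ContDiffAt ℝ 2 f x) : Δ f x ≤ 0 := by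
  rw [InnerProductSpace.laplacian_eq_iteratedFDeriv_stdOrthonormalBasis]
  exact Finset.sum_nonpos fun i _ => by
    simpa [iteratedFDeriv_two_apply] using h.fderiv_fderiv_apply_nonpos hf _

theorem laplacian_eq_laplacian_of_contDiffAt {f : ℂ → ℝ} {z : ℂ} (hf : ContDiffAt ℝ 2 f z) :
    _root_.laplacian f z = Δ f z := by
  have hf' : DifferentiableAt ℝ (fderiv ℝ f) z :=
    (hf.fderiv_right (m := 1) (by norm_num)).differentiableAt (by simp)
  simp [InnerProductSpace.laplacian_eq_iteratedFDeriv_complexPlane, iteratedFDeriv_two_apply,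
    _root_.laplacian, fderiv_clm_apply hf' (differentiableAt_const _)]

theorem laplacian_complex_eq_deriv_deriv {f : ℂ → ℝ} {z : ℂ} (hf : ContDiffAt ℝ 2 f z) :
    Δ f z = deriv (deriv fun t : ℝ => f (z + t)) 0 +
      deriv (deriv fun t : ℝ => f (z + t * Complex.I)) 0 := by
  simp [InnerProductSpace.laplacian_eq_iteratedFDeriv_complexPlane, iteratedFDeriv_two_apply,
    hf.fderiv_fderiv_apply_eq_deriv_deriv]

theorem deriv_deriv_sq_add_sq (a b : ℝ) :
    deriv (deriv fun t : ℝ => (a + t) ^ 2 + b ^ 2) 0 = 2 := by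
  have : deriv (fun t : ℝ => (a + t) ^ 2 + b ^ 2) = fun t => 2 * (a + t) := by
    ext t
    simpa using (((hasDerivAt_id t).const_add a).fun_pow 2).add_const (b ^ 2) |>.deriv
  rw [this]
  simp

theorem deriv_deriv_inv_sq_add_sq {a b : ℝ} (h : a ^ 2 + b ^ 2 ≠ 0) :
    deriv (deriv fun t : ℝ => ((a + t) ^ 2 + b ^ 2)⁻¹) 0 =
      (6 * a ^ 2 - 2 * b ^ 2) / (a ^ 2 + b ^ 2) ^ 3 := by
  set s : ℝ → ℝ := fun t => (a + t) ^ 2 + b ^ 2 with hs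
  have hs' : ∀ t, HasDerivAt s (2 * (a + t)) t := fun t => by
    simpa [hs] using ((hasDerivAt_id t).const_add a).fun_pow 2 |>.add_const (b ^ 2)
  have hne : ∀ᶠ t in 𝓝 (0 : ℝ), s t ≠ 0 :=
    (hs' 0).continuousAt.eventually_ne (by simpa [hs] using h)
  have hderiv : deriv (fun t => (s t)⁻¹) =ᶠ[𝓝 0] fun t => -(2 * (a + t)) / s t ^ 2 := by
    filter_upwards [hne] with t ht
    exact ((hs' t).fun_inv ht).deriv
  have hnum : HasDerivAt (fun t => -(2 * (a + t))) (-2) 0 := by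
    simpa using (((hasDerivAt_id (0 : ℝ)).const_add a).const_mul 2).fun_neg
  rw [hderiv.deriv_eq,
    (hnum.fun_div ((hs' 0).fun_pow 2) (pow_ne_zero 2 (by simpa [hs] using h))).deriv]
  simp [hs]
  field_simp
  ring

theorem laplacian_norm_sq (z : ℂ) : Δ (fun z : ℂ => ‖z‖ ^ 2) z = 4 := by
  rw [laplacian_complex_eq_deriv_deriv (contDiff_norm_sq ℝ).contDiffAt]
  have h1 : (fun t : ℝ => ‖z + t‖ ^ 2) = fun t => (z.re + t) ^ 2 + z.im ^ 2 := by
    ext t; simp [Complex.sq_norm, Complex.normSq_apply]; ring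
  have h2 : (fun t : ℝ => ‖z + t * Complex.I‖ ^ 2) = fun t => (z.im + t) ^ 2 + z.re ^ 2 := by
    ext t; simp [Complex.sq_norm, Complex.normSq_apply]; ring
  rw [h1, h2, deriv_deriv_sq_add_sq, deriv_deriv_sq_add_sq]
  norm_num

theorem contDiffAt_inv_norm_sub_sq {E : Type*} [NormedAddCommGroup E] [InnerProductSpace ℝ E]
    {p z : E} (hz : z ≠ p) : ContDiffAt ℝ 2 (fun z => (‖z - p‖ ^ 2)⁻¹) z :=
  ((contDiff_norm_sq ℝ).comp (contDiff_id.sub contDiff_const)).contDiffAt.inv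
    (by simpa [sub_eq_zero] using hz)

theorem laplacian_inv_norm_sub_sq {p z : ℂ} (hz : z ≠ p) :
    Δ (fun z : ℂ => (‖z - p‖ ^ 2)⁻¹) z = 4 / ‖z - p‖ ^ 4 := by
  have hne : ‖z - p‖ ^ 2 ≠ 0 := by simpa [sub_eq_zero] using hz
  rw [laplacian_complex_eq_deriv_deriv (contDiffAt_inv_norm_sub_sq hz)]
  set a := (z - p).re
  set b := (z - p).im
  have hN : ‖z - p‖ ^ 2 = a ^ 2 + b ^ 2 := by
    simp [a, b, Complex.sq_norm, Complex.normSq_apply]; ring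
  have h1 : (fun t : ℝ => (‖z + t - p‖ ^ 2)⁻¹) = fun t => ((a + t) ^ 2 + b ^ 2)⁻¹ := by
    ext t; simp [a, b, Complex.sq_norm, Complex.normSq_apply]; ring
  have h2 : (fun t : ℝ => (‖z + t * Complex.I - p‖ ^ 2)⁻¹) =
      fun t => ((b + t) ^ 2 + a ^ 2)⁻¹ := by
    ext t; simp [a, b, Complex.sq_norm, Complex.normSq_apply]; ring
  rw [hN] at hne
  rw [h1, h2, deriv_deriv_inv_sq_add_sq hne, deriv_deriv_inv_sq_add_sq (by rwa [add_comm]),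
    show ‖z - p‖ ^ 4 = (‖z - p‖ ^ 2) ^ 2 by ring, hN, add_comm (b ^ 2)]
  field_simp
  ring

theorem hasFDerivAt_inv_norm_sub_sq {E : Type*} [NormedAddCommGroup E] [InnerProductSpace ℝ E]
    {p q : E} (hq : q ≠ p) :
    HasFDerivAt (fun z => (‖z - p‖ ^ 2)⁻¹) ((-2 / ‖q - p‖ ^ 4) • innerSL ℝ (q - p)) q := by
  have hnorm : HasFDerivAt (fun z => ‖z - p‖ ^ 2) (2 • innerSL ℝ (q - p)) q := by
    simpa using ((hasFDerivAt_id q).sub_const p).norm_sq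
  have hne : ‖q - p‖ ^ 2 ≠ 0 := by simpa [sub_eq_zero] using hq
  refine ((hasDerivAt_inv hne).comp_hasFDerivAt q hnorm).congr_fderiv ?_
  ext v
  simp only [smul_apply, innerSL_apply_apply, smul_eq_mul, nsmul_eq_mul, Nat.cast_ofNat]
  field_simp

theorem IsCompact.le_of_frontier_le_of_laplacian_pos {E : Type*} [NormedAddCommGroup E]
    [InnerProductSpace ℝ E] [FiniteDimensional ℝ E] {K : Set E} {w : E → ℝ} {c : ℝ}
    (hK : IsCompact K) (hw : ContinuousOn w K) (hfr : ∀ y ∈ frontier K, w y ≤ c)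
    (hlap : ∀ y ∈ interior K, c < w y → ContDiffAt ℝ 2 w y ∧ 0 < Δ w y) :
    ∀ y ∈ K, w y ≤ c := by
  rcases K.eq_empty_or_nonempty with rfl | hne
  · simp
  obtain ⟨y, hyK, hmax⟩ := hK.exists_isMaxOn hne hw
  suffices w y ≤ c from fun x hx => (hmax hx).trans this
  by_contra! hc
  by_cases hint : y ∈ interior K
  · obtain ⟨hsmooth, hpos⟩ := hlap y hint hc
    have hloc : IsLocalMax w y := Filter.mem_of_superset (mem_interior_iff_mem_nhds.mp hint) hmax
    linarith [hloc.laplacian_nonpos hsmooth]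
  · linarith [hfr y ⟨subset_closure hyK, hint⟩]

theorem nonpos_of_laplacian_nonneg {U : Set ℂ} {v : ℂ → ℝ} (hU : IsOpen U)
    (hbd : Bornology.IsBounded U) (hv : ContinuousOn v (closure U)) (hv2 : ContDiffOn ℝ 2 v U)
    (hlap : ∀ z ∈ U, 0 < v z → 0 ≤ Δ v z) (hfr : ∀ z ∈ frontier U, v z ≤ 0) :
    ∀ z ∈ U, v z ≤ 0 := by
  obtain ⟨R, hR⟩ := hbd.closure.exists_norm_le
  have hR2 : ∀ z ∈ closure U, ‖z‖ ^ 2 ≤ R ^ 2 := fun z hz =>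
    pow_le_pow_left₀ (norm_nonneg z) (hR z hz) 2
  intro z₀ hz₀
  by_contra! hpos
  set ε := v z₀ / (2 * (R ^ 2 + 1))
  have hε : 0 < ε := by positivity
  have hquad : ContDiff ℝ 2 (ε • fun z : ℂ => ‖z‖ ^ 2) := (contDiff_norm_sq ℝ).const_smul ε
  have hbound := hbd.isCompact_closure.le_of_frontier_le_of_laplacian_pos (c := ε * R ^ 2)
    (w := v + ε • fun z : ℂ => ‖z‖ ^ 2) (hv.add hquad.continuous.continuousOn) ?_ ?_ z₀
    (subset_closure hz₀)
  · have : ε * (2 * (R ^ 2 + 1)) = v z₀ := div_mul_cancel₀ _ (by positivity)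
    simp only [Pi.add_apply, Pi.smul_apply, smul_eq_mul] at hbound
    nlinarith [sq_nonneg ‖z₀‖, hR2 z₀ (subset_closure hz₀)]
  · intro y hy
    have hyU : y ∈ closure U := frontier_subset_closure (frontier_closure_subset hy)
    simp only [Pi.add_apply, Pi.smul_apply, smul_eq_mul]
    nlinarith [hfr y (frontier_closure_subset hy), hR2 y hyU]
  · intro y hy hc
    simp only [Pi.add_apply, Pi.smul_apply, smul_eq_mul] at hc
    have hyU' : y ∈ closure U := interior_subset hy
    have hvy : 0 < v y := by nlinarith [hR2 y hyU']
    have hyU : y ∈ U := by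
      by_contra hyU
      linarith [hfr y (by rw [hU.frontier_eq]; exact ⟨hyU', hyU⟩)]
    have hvy2 : ContDiffAt ℝ 2 v y := hv2.contDiffAt (hU.mem_nhds hyU)
    refine ⟨hvy2.add hquad.contDiffAt, ?_⟩
    rw [hvy2.laplacian_add hquad.contDiffAt,
      InnerProductSpace.laplacian_smul _ (contDiff_norm_sq ℝ).contDiffAt, laplacian_norm_sq,
      smul_eq_mul]
    nlinarith [hlap y hyU hvy]

theorem dist_eq_or_dist_eq_of_mem_frontier_closedBall_diff_ball {E : Type*}
    [SeminormedAddCommGroup E] {p y : E} {r s : ℝ}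
    (hy : y ∈ frontier (closedBall p r \ ball p s)) : dist y p = r ∨ dist y p = s := by
  have hyA : y ∈ closedBall p r \ ball p s :=
    (isClosed_closedBall.sdiff isOpen_ball).frontier_subset hy
  by_contra! hne
  have hopen : ball p r \ closedBall p s ⊆ closedBall p r \ ball p s :=
    sdiff_subset_sdiff ball_subset_closedBall ball_subset_closedBall
  refine hy.2 (interior_maximal hopen (isOpen_ball.sdiff isClosed_closedBall) ⟨?_, ?_⟩)
  · exact lt_of_le_of_ne (mem_closedBall.mp hyA.1) hne.1
  · exact fun h => hyA.2 (lt_of_le_of_ne (mem_closedBall.mp h) hne.2)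

theorem sub_mem_posTangentConeAt_closedBall_diff_ball {E : Type*} [NormedAddCommGroup E]
    [NormedSpace ℝ E] {p q : E} {δ : ℝ} (hq : q ∈ sphere p δ) :
    p - q ∈ posTangentConeAt (closedBall p δ \ ball p (δ / 2)) q := by
  refine mem_posTangentConeAt_of_frequently_mem (Eventually.frequently ?_)
  filter_upwards [Ioo_mem_nhdsGT (show (0 : ℝ) < 1 / 2 by norm_num)] with t ht
  have hdist : dist (q + t • (p - q)) p = (1 - t) * δ := by
    rw [← mem_sphere.mp hq, dist_eq_norm, dist_eq_norm,
      show q + t • (p - q) - p = (1 - t) • (q - p) by module, norm_smul,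
      Real.norm_of_nonneg (by linarith [ht.2])]
  have hδ : 0 ≤ δ := (mem_sphere.mp hq) ▸ dist_nonneg
  refine ⟨mem_closedBall.mpr ?_, fun h => ?_⟩
  · rw [hdist]; nlinarith [ht.1]
  · rw [mem_ball, hdist] at h; nlinarith [ht.2]

/-- The barrier term has Laplacian `4ε‖y - p‖⁻⁴`, which beats the zeroth-order term
`C u y ≥ -Cε‖y - p‖⁻²` because `C‖y - p‖² < 4`. -/
theorem laplacian_add_smul_inv_norm_sub_sq_pos {u : ℂ → ℝ} {p y : ℂ} {δ C ε : ℝ} (hC : 0 ≤ C)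
    (hCδ : C * δ ^ 2 < 4) (hε : 0 < ε) (hy : y ≠ p) (hyδ : ‖y - p‖ < δ)
    (hu : ContDiffAt ℝ 2 u y) (hlap : C * u y ≤ Δ u y)
    (hc : ε / δ ^ 2 < u y + ε * (‖y - p‖ ^ 2)⁻¹) :
    0 < Δ (u + ε • fun z => (‖z - p‖ ^ 2)⁻¹) y := by
  have hb := contDiffAt_inv_norm_sub_sq hy
  have hbε : ContDiffAt ℝ 2 (ε • fun z => (‖z - p‖ ^ 2)⁻¹) y := hb.const_smul ε
  rw [hu.laplacian_add hbε, InnerProductSpace.laplacian_smul _ hb,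
    laplacian_inv_norm_sub_sq hy, smul_eq_mul, show ‖y - p‖ ^ 4 = (‖y - p‖ ^ 2) ^ 2 by ring]
  have hN : 0 < ‖y - p‖ ^ 2 := by
    have : 0 < ‖y - p‖ := norm_pos_iff.mpr (sub_ne_zero.mpr hy)
    positivity
  have hNδ : ‖y - p‖ ^ 2 < δ ^ 2 := pow_lt_pow_left₀ hyδ (norm_nonneg _) two_ne_zero
  set N := ‖y - p‖ ^ 2
  have hlin : -(C * ε / N) ≤ C * u y := by
    have : -(ε / N) ≤ u y := by
      have : 0 ≤ ε / δ ^ 2 := by positivity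
      rw [div_eq_mul_inv]; linarith
    simpa [mul_neg, mul_div_assoc] using mul_le_mul_of_nonneg_left this hC
  have hkey : 0 < ε * (4 - C * N) / N ^ 2 := by
    have : C * N ≤ C * δ ^ 2 := mul_le_mul_of_nonneg_left hNδ.le hC
    have : 0 < 4 - C * N := by linarith
    positivity
  have : ε * (4 - C * N) / N ^ 2 = -(C * ε / N) + ε * (4 / N ^ 2) := by
    field_simp
    ring
  linarith

theorem hopf_barrier_comparison {u : ℂ → ℝ} {p : ℂ} {δ C ε : ℝ} (hδ : 0 < δ)
    (hC : 0 ≤ C) (hCδ : C * δ ^ 2 < 4) (hε : 0 < ε)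
    (hu : ∀ z ∈ closedBall p δ, ContDiffAt ℝ 2 u z) (hlap : ∀ z ∈ ball p δ, C * u z ≤ Δ u z)
    (hle : ∀ z ∈ closedBall p δ, u z ≤ 0)
    (hinner : ∀ z ∈ sphere p (δ / 2), u z ≤ -3 * ε / δ ^ 2) :
    ∀ z ∈ closedBall p δ \ ball p (δ / 2), u z + ε * (‖z - p‖ ^ 2)⁻¹ ≤ ε / δ ^ 2 := by
  have hp : ∀ z ∈ closedBall p δ \ ball p (δ / 2), z ≠ p := fun z hz h =>
    hz.2 (h ▸ mem_ball_self (by positivity))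
  have hbε : ∀ z ∈ closedBall p δ \ ball p (δ / 2),
      ContDiffAt ℝ 2 (ε • fun z => (‖z - p‖ ^ 2)⁻¹) z := fun z hz =>
    (contDiffAt_inv_norm_sub_sq (hp z hz)).const_smul ε
  have := ((isCompact_closedBall p δ).diff (isOpen_ball (x := p) (ε := δ / 2))
    ).le_of_frontier_le_of_laplacian_pos (w := u + ε • fun z => (‖z - p‖ ^ 2)⁻¹)
    (c := ε / δ ^ 2) (fun z hz =>
      ((hu z hz.1).continuousAt.add (hbε z hz).continuousAt).continuousWithinAt) ?_ ?_
  · simpa using this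
  · intro y hy
    have hyA := (isClosed_closedBall.sdiff isOpen_ball).frontier_subset hy
    simp only [Pi.add_apply, Pi.smul_apply, smul_eq_mul, ← dist_eq_norm]
    rcases dist_eq_or_dist_eq_of_mem_frontier_closedBall_diff_ball hy with h | h
    · rw [h, div_eq_mul_inv]
      linarith [hle y hyA.1]
    · have := hinner y h
      rw [h]
      field_simp at this ⊢
      linarith
  · intro y hy hc
    have hyA := interior_subset hy
    have hyB : y ∈ ball p δ := by
      rw [← interior_closedBall' p δ]
      exact interior_mono sdiff_subset hy
    exact ⟨(hu y hyA.1).add (hbε y hyA), laplacian_add_smul_inv_norm_sub_sq_pos hC hCδ hε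
      (hp y hyA) (by simpa [dist_eq_norm] using hyB) (hu y hyA.1) (hlap y hyB)
      (by simpa using hc)⟩

theorem hopf_lemma {u : ℂ → ℝ} {p q : ℂ} {δ C : ℝ} (hδ : 0 < δ) (hC : 0 ≤ C)
    (hCδ : C * δ ^ 2 < 4) (hu : ∀ z ∈ closedBall p δ, ContDiffAt ℝ 2 u z)
    (hlap : ∀ z ∈ ball p δ, C * u z ≤ Δ u z) (hneg : ∀ z ∈ ball p δ, u z < 0)
    (hq : q ∈ sphere p δ) (huq : u q = 0) :
    0 < fderiv ℝ u q (q - p) := by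
  have hle : ∀ z ∈ closedBall p δ, u z ≤ 0 := by
    rw [← closure_ball p hδ.ne']
    refine le_on_closure (fun z hz => (hneg z hz).le) ?_ continuousOn_const
    rw [closure_ball p hδ.ne']
    exact fun z hz => (hu z hz).continuousAt.continuousWithinAt
  have hsphere : sphere p (δ / 2) ⊆ ball p δ := fun z hz => by
    rw [mem_ball, mem_sphere.mp hz]; linarith
  obtain ⟨m, hm, hmax⟩ := (isCompact_sphere p (δ / 2)).exists_isMaxOn
    (NormedSpace.sphere_nonempty.mpr (by positivity)) fun z hz =>
      (hu z (ball_subset_closedBall (hsphere hz))).continuousAt.continuousWithinAt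
  have hum := hneg m (hsphere hm)
  -- On the inner sphere `‖z - p‖⁻² = 4 / δ²`, so this `ε` makes `u + ε‖z - p‖⁻² ≤ ε / δ²` there.
  have hε : 0 < -u m * δ ^ 2 / 3 := by have := neg_pos.mpr hum; positivity
  have hbarrier := hopf_barrier_comparison hδ hC hCδ hε hu hlap hle
    fun z hz => by field_simp; exact hmax hz
  have hqδ : ‖q - p‖ = δ := by simpa [dist_eq_norm] using hq
  set ε := -u m * δ ^ 2 / 3
  have hwmax : IsLocalMaxOn (u + ε • fun z => (‖z - p‖ ^ 2)⁻¹)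
      (closedBall p δ \ ball p (δ / 2)) q :=
    IsMaxOn.localize fun z hz => by simpa [huq, hqδ, div_eq_mul_inv] using hbarrier z hz
  have hw := ((hu q (sphere_subset_closedBall hq)).differentiableAt (by norm_num)).hasFDerivAt.add
    ((hasFDerivAt_inv_norm_sub_sq (ne_of_mem_sphere hq hδ.ne')).const_smul ε)
  have hdir := hwmax.hasFDerivWithinAt_nonpos hw.hasFDerivWithinAt
    (sub_mem_posTangentConeAt_closedBall_diff_ball hq)
  have hinner : inner ℝ (q - p) (p - q) = -δ ^ 2 := by
    rw [← neg_sub q p, inner_neg_right, real_inner_self_eq_norm_sq, hqδ]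
  simp only [add_apply, smul_apply, innerSL_apply_apply, hinner, hqδ, smul_eq_mul] at hdir
  rw [← neg_sub p q, map_neg]
  have : 0 < ε * (-2 / δ ^ 4 * -δ ^ 2) := by
    have : -2 / δ ^ 4 * -δ ^ 2 = 2 / δ ^ 2 := by field_simp
    rw [this]; positivity
  linarith

theorem eventually_eq_zero_of_mul_le_laplacian {U : Set ℂ} {u : ℂ → ℝ} {C : ℝ}
    (hU : IsOpen U) (hu : ContDiffOn ℝ 2 u U) (hC : 0 ≤ C) (hlap : ∀ z ∈ U, C * u z ≤ Δ u z)
    (hle : ∀ z ∈ U, u z ≤ 0) {z₀ : ℂ} (hz₀ : z₀ ∈ U) (h0 : u z₀ = 0) :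
    ∀ᶠ z in 𝓝 z₀, u z = 0 := by
  obtain ⟨ρ, hρ, hball⟩ := Metric.isOpen_iff.mp hU z₀ hz₀
  set η := min (ρ / 2) (1 / (C + 1))
  have hη : 0 < η := lt_min (by positivity) (by positivity)
  have hηρ : η ≤ ρ / 2 := min_le_left _ _
  have hηC : η * (C + 1) ≤ 1 := (le_div_iff₀ (by positivity)).mp (min_le_right _ _)
  filter_upwards [ball_mem_nhds z₀ hη] with p hp
  rw [mem_ball] at hp
  have hpU : p ∈ U := hball (by rw [mem_ball]; linarith)
  by_contra hne
  -- The largest ball around `p` inside `{u < 0}` touches the zero set at a point `q`, where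
  -- `u` has an interior maximum, so Hopf's lemma is contradicted.
  set F := (U ∩ u ⁻¹' Iio 0)ᶜ
  have hF : IsClosed F := (hu.continuousOn.isOpen_inter_preimage hU isOpen_Iio).isClosed_compl
  have hz₀F : z₀ ∈ F := fun h => (h0 ▸ h.2 : (0 : ℝ) < 0).false
  obtain ⟨q, hqF, hq⟩ := hF.exists_infDist_eq_dist ⟨z₀, hz₀F⟩ p
  set δ := infDist p F
  have hδ : 0 < δ := (hF.notMem_iff_infDist_pos ⟨z₀, hz₀F⟩).mp
    fun h => h ⟨hpU, lt_of_le_of_ne (hle p hpU) hne⟩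
  have hδη : δ < η := (infDist_le_dist_of_mem hz₀F).trans_lt hp
  have hsub : closedBall p δ ⊆ U := fun z hz => hball (by
    rw [mem_ball]; linarith [dist_triangle z p z₀, mem_closedBall.mp hz])
  have hqU : q ∈ U := hsub (mem_closedBall.mpr (by rw [dist_comm, hq]))
  have huq : u q = 0 := le_antisymm (hle q hqU) (not_lt.mp fun h => hqF ⟨hqU, h⟩)
  have hCδ : C * δ ^ 2 < 4 := by
    have : δ * (C + 1) < 1 := by nlinarith
    nlinarith [mul_nonneg hC hδ.le]
  have hhopf := hopf_lemma hδ hC hCδ (fun z hz => hu.contDiffAt (hU.mem_nhds (hsub hz)))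
    (fun z hz => hlap z (hsub (ball_subset_closedBall hz)))
    (fun z hz => (not_not.mp (ball_infDist_subset_compl hz)).2)
    (mem_sphere.mpr (by rw [dist_comm, hq])) huq
  have hmax : IsLocalMax u q := Filter.mem_of_superset (hU.mem_nhds hqU) fun z hz => by
    simpa [huq] using hle z hz
  simp [hmax.fderiv_eq_zero] at hhopf

theorem Real.mul_le_sinh {x M : ℝ} (hx : x ≤ 0) (hM : -M ≤ x) :
    (1 + Real.exp M) / 2 * x ≤ Real.sinh x := by
  have h1 := Real.add_one_le_exp x
  have h2 : Real.exp (-x) * (x + 1) ≤ 1 := by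
    simpa [← Real.exp_add] using
      mul_le_mul_of_nonneg_left (Real.add_one_le_exp x) (Real.exp_nonneg (-x))
  have h3 : Real.exp (-x) ≤ Real.exp M := Real.exp_le_exp.mpr (by linarith)
  rw [Real.sinh_eq]
  nlinarith

theorem exists_mul_le_mul_sinh {α : Type*} [TopologicalSpace α] {s : Set α} {u K : α → ℝ}
    (hs : IsCompact s) (hu : ContinuousOn u s) (hK : ContinuousOn K s) :
    ∃ C, 0 ≤ C ∧ ∀ z ∈ s, 0 ≤ K z → u z ≤ 0 → C * u z ≤ K z * Real.sinh (u z / 2) := by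
  obtain ⟨k, hk⟩ := hs.exists_bound_of_continuousOn hK
  obtain ⟨M, hM⟩ := hs.exists_bound_of_continuousOn hu
  refine ⟨max k 0 * (1 + Real.exp M) / 4, by positivity, fun z hz hK0 hu0 => ?_⟩
  have hKk : K z ≤ max k 0 := (le_abs_self _).trans ((hk z hz).trans (le_max_left _ _))
  have huM : |u z| ≤ M := by simpa using hM z hz
  have hsinh := Real.mul_le_sinh (x := u z / 2) (M := M) (by linarith)
    (by linarith [neg_abs_le (u z), abs_nonneg (u z)])
  have hsinh0 : Real.sinh (u z / 2) ≤ 0 := Real.sinh_nonpos_iff.mpr (by linarith)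
  calc max k 0 * (1 + Real.exp M) / 4 * u z
      = max k 0 * ((1 + Real.exp M) / 2 * (u z / 2)) := by ring
    _ ≤ max k 0 * Real.sinh (u z / 2) := mul_le_mul_of_nonneg_left hsinh (le_max_right _ _)
    _ ≤ K z * Real.sinh (u z / 2) := mul_le_mul_of_nonpos_right hKk hsinh0

theorem max_principle_sinh_gordon_general (U : Set ℂ) (hU : IsOpen U)
    (hbd : Bornology.IsBounded U) (u K : ℂ → ℝ)
    (hu_cont : ContinuousOn u (closure U)) (hu_C2 : ContDiffOn ℝ 2 u U)
    (hK_cont : ContinuousOn K (closure U)) (hK_nonneg : ∀ z ∈ U, 0 ≤ K z)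
    (heq : ∀ z ∈ U, laplacian u z = K z * Real.sinh (u z / 2))
    (hbdry : ∀ z ∈ frontier U, u z < 0) :
    ∀ z ∈ U, u z < 0 := by
  have hΔ : ∀ z ∈ U, Δ u z = K z * Real.sinh (u z / 2) := fun z hz =>
    laplacian_eq_laplacian_of_contDiffAt (hu_C2.contDiffAt (hU.mem_nhds hz)) ▸ heq z hz
  have hle : ∀ z ∈ U, u z ≤ 0 := nonpos_of_laplacian_nonneg hU hbd hu_cont hu_C2
    (fun z hz hpos => hΔ z hz ▸
      mul_nonneg (hK_nonneg z hz) (Real.sinh_nonneg_iff.mpr (by positivity)))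
    fun z hz => (hbdry z hz).le
  obtain ⟨C, hC, hCu⟩ := exists_mul_le_mul_sinh hbd.isCompact_closure hu_cont hK_cont
  have hlap : ∀ z ∈ U, C * u z ≤ Δ u z := fun z hz =>
    hΔ z hz ▸ hCu z (subset_closure hz) (hK_nonneg z hz) (hle z hz)
  set Z := closure U ∩ u ⁻¹' {0}
  have hZU : Z ⊆ U := fun z hz => by
    by_contra hzU
    exact (hbdry z ⟨hz.1, by rwa [hU.interior_eq]⟩).ne hz.2
  have hZopen : IsOpen Z := isOpen_iff_mem_nhds.mpr fun z hz => by
    filter_upwards [eventually_eq_zero_of_mul_le_laplacian hU hu_C2 hC hlap hle (hZU hz) hz.2,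
      hU.mem_nhds (hZU hz)] with w hw hwU
    exact ⟨subset_closure hwU, hw⟩
  have hZ : Z = ∅ := (isClopen_iff.mp ⟨hu_cont.preimage_isClosed_of_isClosed isClosed_closure
    isClosed_singleton, hZopen⟩).resolve_right fun h =>
      NormedSpace.unbounded_univ ℝ ℂ (h ▸ hbd.subset hZU)
  intro z hz
  refine (hle z hz).lt_of_ne fun h => ?_
  have hzZ : z ∈ Z := ⟨subset_closure hz, h⟩
  rwa [hZ] at hzZ

/-- Maximum principle for the sinh-Gordon type equation: if `u` is continuous on the
closure of a nonempty bounded open set `U`, twice continuously differentiable on `U`,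
solves `Δu = K · sinh(u/2)` on `U` with `K ≥ 0` continuous on the closure of `U`,
and `u < 0` on the frontier of `U`, then `u < 0` throughout `U`. -/
theorem max_principle_sinh_gordon (U : Set ℂ) (hne : U.Nonempty) (hU : IsOpen U)
    (hbd : Bornology.IsBounded U) (u K : ℂ → ℝ)
    (hu_cont : ContinuousOn u (closure U)) (hu_C2 : ContDiffOn ℝ 2 u U)
    (hK_cont : ContinuousOn K (closure U)) (hK_nonneg : ∀ z ∈ U, 0 ≤ K z)
    (heq : ∀ z ∈ U, laplacian u z = K z * Real.sinh (u z / 2))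
    (hbdry : ∀ z ∈ frontier U, u z < 0) :
    ∀ z ∈ U, u z < 0 :=
  max_principle_sinh_gordon_general U hU hbd u K hu_cont hu_C2 hK_cont hK_nonneg heq hbdry
end

section
/- Let ħ ∈ ℂ with ħ ≠ 0, let R ∈ ℝ with |ħ|²·R² = 1, let α, β ∈ ℂ, and let h > 0 be a real number. Consider the 2×2 complex matrices M = !![0, ħ⁻¹·α + ħ·R²·(conj β)·h⁻²; ħ⁻¹·β + ħ·R²·(conj α)·h², 0] and C = !![0, h⁻¹; h, 0]. Then M·C = C·(conj M), where conj M denotes the entrywise complex conjugate of M. -/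
/-!
Since `|ħ|²R² = 1` we have `ħR² = conj ħ⁻¹`, so with `t = ħ⁻¹` the off-diagonal entries of `M` are
`a = tα + h⁻² conj (tβ)` and `b = tβ + h² conj (tα)`, whence `a h = h⁻¹ conj b`. This is the
`(0,0)` entry of `M·C = C·conj M`, and the `(1,1)` entry is its complex conjugate.
-/

open Matrix ComplexConjugate

theorem antidiag_mul_antidiag_eq_antidiag_mul_map_conj {a b : ℂ} {c : ℝ}
    (hab : a * c = (c : ℂ)⁻¹ * conj b) :
    !![0, a; b, 0] * !![0, (c : ℂ)⁻¹; (c : ℂ), 0] =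
      !![0, (c : ℂ)⁻¹; (c : ℂ), 0] * (!![0, a; b, 0] : Matrix (Fin 2) (Fin 2) ℂ).map conj := by
  have hba : b * (c : ℂ)⁻¹ = c * conj a := by
    simpa [mul_comm] using congrArg conj hab.symm
  ext i j
  fin_cases i <;> fin_cases j <;> simp [Matrix.mul_apply, Fin.sum_univ_two, hab, hba]

theorem mul_ofReal_sq_eq_conj_inv {z : ℂ} {R : ℝ} (hR : ‖z‖ ^ 2 * R ^ 2 = 1) :
    z * (R : ℂ) ^ 2 = conj z⁻¹ := by
  rw [map_inv₀]
  refine eq_inv_of_mul_eq_one_right ?_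
  rw [← mul_assoc, Complex.conj_mul', ← Complex.ofReal_pow, ← Complex.ofReal_pow,
    ← Complex.ofReal_mul, hR, Complex.ofReal_one]

theorem real_structure_preserved_general (hbar : ℂ) (R : ℝ)
    (hR : ‖hbar‖ ^ 2 * R ^ 2 = 1) (α β : ℂ) (h : ℝ) :
    (!![0, hbar⁻¹ * α + hbar * (R : ℂ) ^ 2 * starRingEnd ℂ β * ((h : ℂ) ^ 2)⁻¹;
        hbar⁻¹ * β + hbar * (R : ℂ) ^ 2 * starRingEnd ℂ α * (h : ℂ) ^ 2, 0] :
      Matrix (Fin 2) (Fin 2) ℂ) * !![0, (h : ℂ)⁻¹; (h : ℂ), 0] =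
    (!![0, (h : ℂ)⁻¹; (h : ℂ), 0] : Matrix (Fin 2) (Fin 2) ℂ) *
      (!![0, hbar⁻¹ * α + hbar * (R : ℂ) ^ 2 * starRingEnd ℂ β * ((h : ℂ) ^ 2)⁻¹;
          hbar⁻¹ * β + hbar * (R : ℂ) ^ 2 * starRingEnd ℂ α * (h : ℂ) ^ 2, 0] :
        Matrix (Fin 2) (Fin 2) ℂ).map (starRingEnd ℂ) := by
  apply antidiag_mul_antidiag_eq_antidiag_mul_map_conj
  rw [mul_ofReal_sq_eq_conj_inv hR]
  rcases eq_or_ne (h : ℂ) 0 with h0 | h0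
  · simp [h0]
  · simp only [map_add, map_mul, map_pow, Complex.conj_conj, Complex.conj_ofReal, map_inv₀]
    field_simp
    ring

/-- If `|ħ|²R² = 1`, the off-diagonal connection form `M` of `∇_{ħ,R}` intertwines the
real structure `C = !![0, h⁻¹; h, 0]`: `M·C = C·(conj M)`, so the holonomy is real. -/
theorem real_structure_preserved (hbar : ℂ) (hhbar : hbar ≠ 0) (R : ℝ)
    (hR : ‖hbar‖ ^ 2 * R ^ 2 = 1) (α β : ℂ) (h : ℝ) (hh : 0 < h) :
    (!![0, hbar⁻¹ * α + hbar * (R : ℂ) ^ 2 * starRingEnd ℂ β * ((h : ℂ) ^ 2)⁻¹;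
        hbar⁻¹ * β + hbar * (R : ℂ) ^ 2 * starRingEnd ℂ α * (h : ℂ) ^ 2, 0] :
      Matrix (Fin 2) (Fin 2) ℂ) * !![0, (h : ℂ)⁻¹; (h : ℂ), 0] =
    (!![0, (h : ℂ)⁻¹; (h : ℂ), 0] : Matrix (Fin 2) (Fin 2) ℂ) *
      (!![0, hbar⁻¹ * α + hbar * (R : ℂ) ^ 2 * starRingEnd ℂ β * ((h : ℂ) ^ 2)⁻¹;
          hbar⁻¹ * β + hbar * (R : ℂ) ^ 2 * starRingEnd ℂ α * (h : ℂ) ^ 2, 0] :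
        Matrix (Fin 2) (Fin 2) ℂ).map (starRingEnd ℂ) :=
  real_structure_preserved_general hbar R hR α β h
end
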